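/- arXiv:math/0701282 — 2 statements merged into one kernel-verified Lean document; each statement's English description precedes it below -/
import Mathlib

section
/- Let u, v, w be paths in Q such that v is derived of u, w is derived of v, and w is derived of u of order 1. Then there exist paths u_1, u_2, a bypass (α,θ), and a path θ' derived of θ such that u = u_2 α u_1, v = u_2 θ u_1, and w = u_2 θ' u_1. -/
attribute [local instance] Classical.propDecidable

/-- A quiver given by a set of vertices, a set of arrows and source/target maps. -/
structure Quiv where
  V : Type
  A : Type
  s : A → V
  t : A → V

namespace Quiv

section Basic

variable (Q : Quiv)

/-- A (nontrivial) path is a nonempty list of composable arrows, listed in the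
order they are traversed. -/
def IsPath (p : List Q.A) : Prop :=
  p ≠ [] ∧ p.Chain' (fun a b => Q.t a = Q.s b)

/-- Source of a nonempty list of arrows. -/
def src (p : List Q.A) : Option Q.V := p.head?.map Q.s

/-- Target of a nonempty list of arrows. -/
def tgt (p : List Q.A) : Option Q.V := p.getLast?.map Q.t

/-- `Q` has no oriented cycle: no nontrivial path has equal source and target. -/
def NoCycle : Prop := ∀ p, Q.IsPath p → Q.src p ≠ Q.tgt p

/-- `Q` has no multiple arrows: distinct arrows never have both the same source
and the same target. -/
def NoMultipleArrows : Prop :=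
  ∀ a b : Q.A, Q.s a = Q.s b → Q.t a = Q.t b → a = b

/-- A bypass `(α, u)`: `u` is a path parallel to the arrow `α` and distinct from it. -/
def IsBypass (α : Q.A) (u : List Q.A) : Prop :=
  Q.IsPath u ∧ Q.src u = some (Q.s α) ∧ Q.tgt u = some (Q.t α) ∧ u ≠ [α]

/-- `Repl n u v` : `v` is obtained from `u` by replacing `n` of its arrows (at
increasing positions) by bypass paths. -/
inductive Repl : ℕ → List Q.A → List Q.A → Prop
  | nil : Repl 0 [] []
  | keep (a : Q.A) {n : ℕ} {u v : List Q.A} : Repl n u v → Repl n (a :: u) (a :: v)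
  | repl {a : Q.A} {p : List Q.A} {n : ℕ} {u v : List Q.A} :
      Q.IsBypass a p → Repl n u v → Repl (n + 1) (a :: u) (p ++ v)

/-- `v` is derived of `u` of order `t`. -/
def DerivedOfOrder (t : ℕ) (u v : List Q.A) : Prop := 1 ≤ t ∧ Q.Repl t u v

/-- `v` is derived of `u` (of some order `t ≥ 1`). -/
def Derived (u v : List Q.A) : Prop := ∃ t, Q.DerivedOfOrder t u v

/-- `W(α)` : the number of bypasses of the form `(α, u)`. -/
noncomputable def Wa (α : Q.A) : ℕ := Nat.card {u : List Q.A // Q.IsBypass α u}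

/-- `W(u)` for a path `u = α_n ⋯ α_1` : the sum of the `W(α_i)`. -/
noncomputable def Wp (u : List Q.A) : ℕ := (u.map Q.Wa).sum

/-- A linear order `<` on the nontrivial paths of `Q` refining the `W`-ordering and
compatible with concatenation, as in Le Meur's Definition 2.5. -/
structure PathOrder where
  lt : List Q.A → List Q.A → Prop
  irrefl : ∀ p, Q.IsPath p → ¬ lt p p
  trans' : ∀ p q r, lt p q → lt q r → lt p r
  total' : ∀ p q, Q.IsPath p → Q.IsPath q → p ≠ q → lt p q ∨ lt q p
  wlt : ∀ p q, Q.IsPath p → Q.IsPath q → Q.Wp p < Q.Wp q → lt p q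
  concat : ∀ u u' v v' : List Q.A, lt v u → lt v' u' →
    Q.IsPath (v ++ v') → Q.IsPath (u ++ u') → lt (v ++ v') (u ++ u')

end Basic

/-- Lexicographic (strict) order on bypasses: `(α,u) < (β,v)` iff `α < β`, or
`α = β` and `u < v`. -/
def PathOrder.bplt {Q : Quiv} (o : Q.PathOrder) (b c : Q.A × List Q.A) : Prop :=
  o.lt [b.1] [c.1] ∨ (b.1 = c.1 ∧ o.lt b.2 c.2)

/-- Lexicographic non-strict order on bypasses. -/
def PathOrder.bple {Q : Quiv} (o : Q.PathOrder) (b c : Q.A × List Q.A) : Prop :=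
  o.bplt b c ∨ b = c

section Linear

variable (Q : Quiv) (k : Type) [Field k]

/-- Concatenation product on the free `k`-module on lists of arrows (the morphism
spaces of the path category `kQ`). -/
noncomputable def mulF (f g : List Q.A →₀ k) : List Q.A →₀ k :=
  f.sum fun p c => g.sum fun q d => Finsupp.single (p ++ q) (c * d)

/-- Image of the arrow `a` under the transvection `φ_{α,u,τ}`. -/
noncomputable def arrowImg (α : Q.A) (u : List Q.A) (τ : k) (a : Q.A) : List Q.A →₀ k :=
  if a = α then Finsupp.single [a] 1 + τ • Finsupp.single u 1 else Finsupp.single [a] 1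

/-- Image of a path under the transvection `φ_{α,u,τ}`. -/
noncomputable def substPoly (α : Q.A) (u : List Q.A) (τ : k) : List Q.A → (List Q.A →₀ k)
  | [] => Finsupp.single [] 1
  | a :: rest => mulF Q k (arrowImg Q k α u τ a) (substPoly α u τ rest)

/-- The transvection `φ_{α,u,τ}` as a linear endomorphism of `kQ` : it is the
`k`-linear automorphism of `kQ` fixing every vertex, sending `α` to `α + τ u`, and
fixing every other arrow. -/
noncomputable def substMap (α : Q.A) (u : List Q.A) (τ : k) :
    Module.End k (List Q.A →₀ k) :=
  Finsupp.linearCombination k (substPoly Q k α u τ)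

/-- `ψ` lies in the group `T` generated by the transvections, i.e. it is a finite
product of transvections. -/
def MemT (ψ : Module.End k (List Q.A →₀ k)) : Prop :=
  ∃ L : List (Q.A × List Q.A × k),
    (∀ x ∈ L, Q.IsBypass x.1 x.2.1) ∧
    ψ = (L.map fun x => substMap Q k x.1 x.2.1 x.2.2).prod

/-- `r'` is a subexpression of `r`. -/
def Subexpr (r' r : List Q.A →₀ k) : Prop :=
  r'.support ⊆ r.support ∧ ∀ p ∈ r'.support, r' p = r p

/-- A minimal relation of `I` : a nonzero `r ∈ I` such that `0` and `r` are the only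
subexpressions of `r` lying in `I`. -/
def IsMinimalRel (I : Submodule k (List Q.A →₀ k)) (r : List Q.A →₀ k) : Prop :=
  r ∈ I ∧ r ≠ 0 ∧ ∀ r', Subexpr Q k r' r → r' ∈ I → r' = 0 ∨ r' = r

/-- `ReplExp g u v c` : `v` is obtained from the path `u` by replacing some of its
arrows `a` (at increasing positions) by paths `w ∈ supp(g a)`, `w ≠ a`, and `c` is
the product of the corresponding coefficients `w^*(g a)`. -/
inductive ReplExp (g : Q.A → (List Q.A →₀ k)) : List Q.A → List Q.A → k → Prop
  | nil : ReplExp g [] [] 1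
  | keep (a : Q.A) {u v : List Q.A} {c : k} :
      ReplExp g u v c → ReplExp g (a :: u) (a :: v) c
  | repl (a : Q.A) {w u v : List Q.A} {c : k} :
      w ∈ (g a).support → w ≠ [a] → ReplExp g u v c →
      ReplExp g (a :: u) (w ++ v) ((g a) w * c)

/-- The homotopy relation `∼_I` on walks. A walk is a list of pairs `(a, d)` where
`a` is an arrow and `d` is `true` for `a` and `false` for the formal inverse `a⁻¹`;
the relation is the smallest equivalence relation compatible with concatenation,
cancelling `a a⁻¹` and `a⁻¹ a`, and identifying any two paths lying in the support
of a minimal relation of `I`. -/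
inductive Homotopic (I : Submodule k (List Q.A →₀ k)) :
    List (Q.A × Bool) → List (Q.A × Bool) → Prop
  | refl (w : List (Q.A × Bool)) : Homotopic I w w
  | symm {w w' : List (Q.A × Bool)} : Homotopic I w w' → Homotopic I w' w
  | trans {w w' w'' : List (Q.A × Bool)} :
      Homotopic I w w' → Homotopic I w' w'' → Homotopic I w w''
  | cancel (a : Q.A) : Homotopic I [(a, true), (a, false)] []
  | cancel' (a : Q.A) : Homotopic I [(a, false), (a, true)] []
  | rel {r : List Q.A →₀ k} (hr : IsMinimalRel Q k I r) {u v : List Q.A}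
      (hu : u ∈ r.support) (hv : v ∈ r.support) :
      Homotopic I (u.map fun a => (a, true)) (v.map fun a => (a, true))
  | congr (w x : List (Q.A × Bool)) {v v' : List (Q.A × Bool)} :
      Homotopic I v v' → Homotopic I (w ++ v ++ x) (w ++ v' ++ x)

/-- `I` is a monomial admissible ideal of `kQ` : every element is a combination of
paths of length `≥ 2`, membership is detected on supports (monomiality), and `I`
is stable under concatenation with paths on either side. -/
def IsMonomialAdmissible (I : Submodule k (List Q.A →₀ k)) : Prop :=
  (∀ r ∈ I, ∀ p ∈ (r : List Q.A →₀ k).support, Q.IsPath p ∧ 2 ≤ p.length) ∧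
  (∀ r : List Q.A →₀ k, (∀ p ∈ r.support, Finsupp.single p (1 : k) ∈ I) → r ∈ I) ∧
  (∀ r ∈ I, ∀ p ∈ (r : List Q.A →₀ k).support, Finsupp.single p (1 : k) ∈ I) ∧
  (∀ p q : List Q.A, Q.IsPath p → Finsupp.single q (1 : k) ∈ I → Q.IsPath (p ++ q) →
    Finsupp.single (p ++ q) (1 : k) ∈ I) ∧
  (∀ p q : List Q.A, Finsupp.single p (1 : k) ∈ I → Q.IsPath q → Q.IsPath (p ++ q) →
    Finsupp.single (p ++ q) (1 : k) ∈ I)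

/-- A `k`-linear automorphism of `kQ` (fixing the vertices) is the transvection
`φ_{α,u,τ}` when its underlying linear map is `substMap α u τ`. -/
def IsTransvectionE (ψ : (List Q.A →₀ k) ≃ₗ[k] (List Q.A →₀ k))
    (α : Q.A) (u : List Q.A) (τ : k) : Prop :=
  (ψ : (List Q.A →₀ k) →ₗ[k] (List Q.A →₀ k)) = substMap Q k α u τ

/-- The subgroup `T_{<(α,u)}` generated by the transvections `φ_{β,v,τ}` with
`(β,v) < (α,u)`. -/
noncomputable def TltSub (o : Q.PathOrder) (b : Q.A × List Q.A) :
    Subgroup ((List Q.A →₀ k) ≃ₗ[k] (List Q.A →₀ k)) :=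
  Subgroup.closure
    {ψ | ∃ β v τ, Q.IsBypass β v ∧ o.bplt (β, v) b ∧ IsTransvectionE Q k ψ β v τ}

/-- The subgroup `T_{≤(α,u)}` generated by the transvections `φ_{β,v,τ}` with
`(β,v) ≤ (α,u)`. -/
noncomputable def TleSub (o : Q.PathOrder) (b : Q.A × List Q.A) :
    Subgroup ((List Q.A →₀ k) ≃ₗ[k] (List Q.A →₀ k)) :=
  Subgroup.closure
    {ψ | ∃ β v τ, Q.IsBypass β v ∧ o.bple (β, v) b ∧ IsTransvectionE Q k ψ β v τ}

/-- The set `T_{(α,u)} = {φ_{α,u,τ} | τ ∈ k}`. -/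
def TsingleSet (b : Q.A × List Q.A) :
    Set ((List Q.A →₀ k) ≃ₗ[k] (List Q.A →₀ k)) :=
  {ψ | ∃ τ : k, IsTransvectionE Q k ψ b.1 b.2 τ}

/-- `m` is the `<`-maximum of the support of `r`. -/
def IsMaxPath (o : Q.PathOrder) (r : List Q.A →₀ k) (m : List Q.A) : Prop :=
  m ∈ r.support ∧ ∀ p ∈ r.support, p ≠ m → o.lt p m

/-- `B` is the Gröbner basis of the subspace `F` with respect to the path order `o` :
`B` spans `F` and each `r ∈ B` has a leading path `m` (with coefficient `1`, all other
paths of `supp r` being `<`-smaller) whose coefficient in every other element of `B`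
vanishes. -/
def IsGB (o : Q.PathOrder) (F : Submodule k (List Q.A →₀ k))
    (B : Set (List Q.A →₀ k)) : Prop :=
  B ⊆ (F : Set (List Q.A →₀ k)) ∧ Submodule.span k B = F ∧
  ∀ r ∈ B, ∃ m, m ∈ (r : List Q.A →₀ k).support ∧ r m = 1 ∧
    (∀ p ∈ (r : List Q.A →₀ k).support, p ≠ m → o.lt p m) ∧
    ∀ r' ∈ B, r' ≠ r → (r' : List Q.A →₀ k) m = 0

end Linear

section Aux3

variable {Q : Quiv}

lemma src_cons (a : Q.A) (u : List Q.A) : Q.src (a :: u) = some (Q.s a) := rfl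

lemma src_append {p : List Q.A} (q : List Q.A) (hp : p ≠ []) :
    Q.src (p ++ q) = Q.src p := by
  unfold Quiv.src; rw [List.head?_append_of_ne_nil _ hp]

lemma tgt_append (p : List Q.A) {q : List Q.A} (hq : q ≠ []) :
    Q.tgt (p ++ q) = Q.tgt q := by
  unfold Quiv.tgt
  rw [List.getLast?_append]
  obtain ⟨x, hx⟩ := List.exists_mem_of_ne_nil q hq
  cases h : q.getLast? with
  | none => exact absurd (List.getLast?_eq_none_iff.mp h) hq
  | some y => rfl

lemma tgt_cons {a : Q.A} {u : List Q.A} (hu : u ≠ []) : Q.tgt (a :: u) = Q.tgt u :=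
  tgt_append [a] hu

lemma isPath_append_left {p q : List Q.A} (h : Q.IsPath (p ++ q)) (hp : p ≠ []) :
    Q.IsPath p :=
  ⟨hp, (List.isChain_append.mp h.2).1⟩

lemma isPath_append_right {p q : List Q.A} (h : Q.IsPath (p ++ q)) (hq : q ≠ []) :
    Q.IsPath q :=
  ⟨hq, (List.isChain_append.mp h.2).2.1⟩

lemma junction {p q : List Q.A} (h : Q.IsPath (p ++ q)) (hp : p ≠ []) (hq : q ≠ []) :
    Q.tgt p = Q.src q := by
  have h3 := (List.isChain_append.mp h.2).2.2
  cases hl : p.getLast? with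
  | none => exact absurd (List.getLast?_eq_none_iff.mp hl) hp
  | some x =>
    cases hh : q.head? with
    | none => exact absurd (List.head?_eq_none_iff.mp hh) hq
    | some y =>
      have := h3 x hl y hh
      unfold Quiv.tgt Quiv.src
      rw [hl, hh, Option.map_some, Option.map_some, this]

/-- Lemma D -/
lemma no_ext (hnc : Q.NoCycle) {q r : List Q.A} (h : Q.IsPath (q ++ r)) (hq : q ≠ [])
    (hr : r ≠ []) (ht : Q.tgt q = Q.tgt (q ++ r)) : False := by
  have hpr := isPath_append_right h hr
  have hj := junction h hq hr
  exact hnc r hpr (by rw [← hj, ht, tgt_append _ hr])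

/-- Lemma C -/

lemma bypass_head_ne (hnc : Q.NoCycle) {a : Q.A} {q : List Q.A} (hq : Q.IsPath q)
    (ht : Q.tgt q = some (Q.t a)) (hne : q ≠ [a]) : q.head? ≠ some a := by
  intro hh
  cases q with
  | nil => simp at hh
  | cons b q' =>
    have hba : b = a := by simpa using hh
    subst hba
    have hq' : q' ≠ [] := by rintro rfl; exact hne rfl
    refine no_ext hnc (q := [b]) (r := q') hq (by simp) hq' ?_
    show Q.tgt [b] = Q.tgt (b :: q')
    rw [ht]; simp [Quiv.tgt]

lemma repl_nil {n : ℕ} {v : List Q.A} (h : Q.Repl n [] v) : n = 0 ∧ v = [] := by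
  cases h; exact ⟨rfl, rfl⟩

lemma repl_eq_of_zero {n : ℕ} {u v : List Q.A} (h : Q.Repl n u v) (hn : n = 0) :
    u = v := by
  induction h with
  | nil => rfl
  | keep a h ih => rw [ih hn]
  | repl hb h ih => exact absurd hn (Nat.succ_ne_zero _)

lemma repl_ne_nil {n : ℕ} {u v : List Q.A} (h : Q.Repl n u v) (hu : u ≠ []) : v ≠ [] := by
  cases h with
  | nil => exact hu
  | keep a h => simp
  | repl hb h => intro hpv; exact hb.1.1 (List.append_eq_nil_iff.mp hpv).1

lemma bypass_two_le (hnm : Q.NoMultipleArrows) {a : Q.A} {p : List Q.A}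
    (h : Q.IsBypass a p) : 2 ≤ p.length := by
  obtain ⟨⟨hne, _⟩, hs, ht, hnea⟩ := h
  match p with
  | [] => exact absurd rfl hne
  | [b] =>
    have h1 : Q.s b = Q.s a := by simpa [Quiv.src] using hs
    have h2 : Q.t b = Q.t a := by simpa [Quiv.tgt] using ht
    exact absurd (by rw [hnm b a h1 h2]) hnea
  | b :: c :: rest => simp [List.length_cons]

lemma repl_length (hnm : Q.NoMultipleArrows) {n : ℕ} {u v : List Q.A}
    (h : Q.Repl n u v) : u.length + n ≤ v.length := by
  induction h with
  | nil => simp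
  | keep a h ih => simp only [List.length_cons]; omega
  | repl hb h ih =>
    have := bypass_two_le hnm hb
    simp only [List.length_cons, List.length_append]
    omega

lemma repl_src {n : ℕ} {u v : List Q.A} (h : Q.Repl n u v) : Q.src v = Q.src u := by
  induction h with
  | nil => rfl
  | keep a h ih => rfl
  | repl hb h ih => rw [src_append _ hb.1.1, hb.2.1]; rfl

lemma repl_tgt {n : ℕ} {u v : List Q.A} (h : Q.Repl n u v) : Q.tgt v = Q.tgt u := by
  induction h with
  | nil => rfl
  | keep a h ih =>
    rename_i n u v
    rcases eq_or_ne u [] with rfl | hu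
    · obtain ⟨_, rfl⟩ := repl_nil h
      rfl
    · have hv := repl_ne_nil h hu
      rw [tgt_cons hv, tgt_cons hu, ih]
  | repl hb h ih =>
    rename_i a p n u v
    rcases eq_or_ne u [] with rfl | hu
    · obtain ⟨_, rfl⟩ := repl_nil h
      rw [List.append_nil, hb.2.2.1]
      simp [Quiv.tgt]
    · have hv := repl_ne_nil h hu
      rw [tgt_append p hv, tgt_cons hu, ih]

lemma repl_split {n : ℕ} {p q r : List Q.A} (h : Q.Repl n (p ++ q) r) :
    ∃ p' q' n₁ n₂, r = p' ++ q' ∧ n₁ + n₂ = n ∧ Q.Repl n₁ p p' ∧ Q.Repl n₂ q q' := by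
  induction p generalizing n r with
  | nil => exact ⟨[], r, 0, n, rfl, Nat.zero_add n, Repl.nil, h⟩
  | cons a p₂ ih =>
    cases h with
    | keep _ h' =>
      obtain ⟨p', q', n₁, n₂, rfl, rfl, h1, h2⟩ := ih h'
      exact ⟨a :: p', q', n₁, n₂, rfl, rfl, Repl.keep a h1, h2⟩
    | repl hb h' =>
      obtain ⟨p', q', n₁, n₂, rfl, rfl, h1, h2⟩ := ih h'
      exact ⟨_ ++ p', q', n₁ + 1, n₂, by rw [List.append_assoc], by omega,
        Repl.repl hb h1, h2⟩


lemma repl_cons_inv {n : ℕ} {u : List Q.A} {a : Q.A} {w : List Q.A}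
    (h : Q.Repl n (a :: u) w) :
    (∃ w', w = a :: w' ∧ Q.Repl n u w') ∨
    (∃ p w' m, n = m + 1 ∧ Q.IsBypass a p ∧ w = p ++ w' ∧ Q.Repl m u w') := by
  cases h with
  | keep _ h => exact Or.inl ⟨_, rfl, h⟩
  | repl hb h => exact Or.inr ⟨_, _, _, rfl, hb, rfl, h⟩

lemma main (hnc : Q.NoCycle) (hnm : Q.NoMultipleArrows) :
    ∀ (u v w : List Q.A) (s t : ℕ), 1 ≤ s → 1 ≤ t →
      Q.Repl 1 u w → Q.Repl s u v → Q.Repl t v w →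
      Q.IsPath u → Q.IsPath v → Q.IsPath w →
      ∃ (u₁ u₂ : List Q.A) (α : Q.A) (θ θ' : List Q.A),
        Q.IsBypass α θ ∧ Q.Derived θ θ' ∧
        u = u₁ ++ α :: u₂ ∧ v = u₁ ++ θ ++ u₂ ∧ w = u₁ ++ θ' ++ u₂ := by
  intro u
  induction u with
  | nil =>
    intro v w s t hs ht h1 h2 h3 _ _ _
    exact absurd (repl_nil h1).1 one_ne_zero
  | cons a u' IH =>
    intro v w s t hs ht h1 h2 h3 hup hvp hwp
    cases h1 with
    | keep _ h1' =>
      rename_i w3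
      cases h2 with
      | keep _ h2' =>
        rename_i v'
        rcases repl_cons_inv h3 with ⟨w'', hw'', h3'⟩ | ⟨q, w₂, m₂, htm, hbq, heq, h3'⟩
        · rw [List.cons.injEq] at hw''
          obtain ⟨-, rfl⟩ := hw''
          have hu'ne : u' ≠ [] := by
            rintro rfl
            exact absurd (repl_nil h1').1 one_ne_zero
          have hv'ne : v' ≠ [] := repl_ne_nil h2' hu'ne
          have hw3ne : w3 ≠ [] := repl_ne_nil h1' hu'ne
          have hu' : Q.IsPath u' := ⟨hu'ne, hup.2.tail⟩
          have hv' : Q.IsPath v' := ⟨hv'ne, hvp.2.tail⟩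
          have hw3 : Q.IsPath w3 := ⟨hw3ne, hwp.2.tail⟩
          obtain ⟨u₁, u₂, α, θ, θ', hbθ, hd, e1, e2, e3⟩ :=
            IH v' w3 s t hs ht h1' h2' h3' hu' hv' hw3
          exact ⟨a :: u₁, u₂, α, θ, θ', hbθ, hd, by simp [e1], by simp [e2], by simp [e3]⟩
        · exfalso
          have hqne : q ≠ [] := hbq.1.1
          have hhead : q.head? = some a := by
            rw [← List.head?_append_of_ne_nil q hqne (l₂ := w₂), ← heq]
            rfl
          exact bypass_head_ne hnc hbq.1 hbq.2.2.1 hbq.2.2.2 hhead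
      | repl hb2 h2' =>
        rename_i θ m v'
        exfalso
        obtain ⟨θ'', w₂, t₁, t₂, heq, hsum, hr1, hr2⟩ := repl_split h3
        have hθ''ne : θ'' ≠ [] := repl_ne_nil hr1 hb2.1.1
        have hhead : θ''.head? = some a := by
          rw [← List.head?_append_of_ne_nil θ'' hθ''ne (l₂ := w₂), ← heq]
          rfl
        have hθ''p : Q.IsPath θ'' := by
          rw [heq] at hwp
          exact isPath_append_left hwp hθ''ne
        have htgt : Q.tgt θ'' = some (Q.t a) := (repl_tgt hr1).trans hb2.2.2.1
        have hlen : 2 ≤ θ''.length := le_trans (bypass_two_le hnm hb2)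
          (by have := repl_length hnm hr1; omega)
        have hne : θ'' ≠ [a] := by
          rintro rfl; simp at hlen
        exact bypass_head_ne hnc hθ''p htgt hne hhead
    | repl hb1 h1'' =>
      rename_i θ' w₄
      obtain rfl : u' = w₄ := repl_eq_of_zero h1'' rfl
      cases h2 with
      | keep _ h2' =>
        rename_i v'
        exfalso
        rcases repl_cons_inv h3 with ⟨w'', heq, h3'⟩ | ⟨q, w₂, m₂, htm, hbq, heq, h3'⟩
        · have hhead : θ'.head? = some a := by
            rw [← List.head?_append_of_ne_nil θ' hb1.1.1 (l₂ := u'), heq]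
            rfl
          exact bypass_head_ne hnc hb1.1 hb1.2.2.1 hb1.2.2.2 hhead
        · have L1 := repl_length hnm h2'
          have L2 := repl_length hnm h3'
          have Llen : θ'.length + u'.length = q.length + w₂.length := by
            have := congrArg List.length heq
            simpa using this
          rcases List.append_eq_append_iff.mp heq with ⟨r, hq, hu'⟩ | ⟨r, hθ', hw₂⟩
          · have : q.length = θ'.length + r.length := by rw [hq]; simp
            omega
          · have hrne : r ≠ [] := by
              rintro rfl
              rw [List.append_nil] at hθ'
              subst hθ'
              omega
            refine no_ext hnc (q := q) (r := r) (hθ' ▸ hb1.1) hbq.1.1 hrne ?_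
            rw [hbq.2.2.1, ← hθ', hb1.2.2.1]
      | repl hb2 h2' =>
        rename_i θ m v'
        obtain ⟨θ'', w₂, t₁, t₂, heq, hsum, hr1, hr2⟩ := repl_split h3
        have hθ''ne : θ'' ≠ [] := repl_ne_nil hr1 hb2.1.1
        have htgt'' : Q.tgt θ'' = some (Q.t a) := (repl_tgt hr1).trans hb2.2.2.1
        have hθ''p : Q.IsPath θ'' := by
          rw [heq] at hwp
          exact isPath_append_left hwp hθ''ne
        have L1 := repl_length hnm h2'
        have L2 := repl_length hnm hr2
        rcases List.append_eq_append_iff.mp heq with ⟨r, hθ'', hu'⟩ | ⟨r, hθ', hw₂⟩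
        · rcases eq_or_ne r [] with rfl | hrne
          · rw [List.append_nil] at hθ''
            rw [List.nil_append] at hu'
            have hl : u'.length = w₂.length := by rw [hu']
            have hm : m = 0 := by omega
            have ht₂ : t₂ = 0 := by omega
            obtain rfl : u' = v' := repl_eq_of_zero h2' hm
            exact ⟨[], u', a, θ, θ', hb2, ⟨t₁, by omega, by rw [← hθ'']; exact hr1⟩,
              rfl, rfl, rfl⟩
          · exact (no_ext hnc (q := θ') (r := r) (hθ'' ▸ hθ''p) hb1.1.1 hrne
              (by rw [hb1.2.2.1, ← hθ'', htgt''])).elim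
        · rcases eq_or_ne r [] with rfl | hrne
          · rw [List.append_nil] at hθ'
            rw [List.nil_append] at hw₂
            have hl : w₂.length = u'.length := by rw [hw₂]
            have hm : m = 0 := by omega
            have ht₂ : t₂ = 0 := by omega
            obtain rfl : u' = v' := repl_eq_of_zero h2' hm
            exact ⟨[], u', a, θ, θ', hb2, ⟨t₁, by omega, by rw [hθ']; exact hr1⟩,
              rfl, rfl, rfl⟩
          · exact (no_ext hnc (q := θ'') (r := r) (hθ' ▸ hb1.1) hθ''ne hrne
              (by rw [htgt'', ← hθ', hb1.2.2.1])).elim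


end Aux3

/-- If `v` is derived of `u`, `w` is derived of `v` and `w` is derived of
`u` of order `1`, then `u = u₂ α u₁`, `v = u₂ θ u₁` and `w = u₂ θ' u₁` for some paths
`u₁, u₂`, a bypass `(α,θ)` and a path `θ'` derived of `θ`.  (Lists of arrows are written
in traversal order, so `u₂ α u₁` is `u₁ ++ [α] ++ u₂`.) -/
theorem stmt_3 (Q : Quiv) [Fintype Q.V] [Fintype Q.A]
    (hnc : Q.NoCycle) (hnm : Q.NoMultipleArrows)
    (u v w : List Q.A) (hu : Q.IsPath u) (hv : Q.IsPath v) (hw : Q.IsPath w)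
    (h1 : Q.Derived u v) (h2 : Q.Derived v w) (h3 : Q.DerivedOfOrder 1 u w) :
    ∃ (u₁ u₂ : List Q.A) (α : Q.A) (θ θ' : List Q.A),
      Q.IsBypass α θ ∧ Q.Derived θ θ' ∧
      u = u₁ ++ α :: u₂ ∧ v = u₁ ++ θ ++ u₂ ∧ w = u₁ ++ θ' ++ u₂ := by
  obtain ⟨s, hs, h2r⟩ := h1
  obtain ⟨t, ht, h3r⟩ := h2
  obtain ⟨-, h1r⟩ := h3
  exact main hnc hnm u v w s t hs ht h1r h2r h3r hu hv hw

end Quiv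
end

section
/- Let (α,u,β,v) be a double bypass in Q, write u = u_2 β u_1 (this decomposition is unique since Q has no oriented cycles), and let w := u_2 v u_1 be the path obtained from u after replacing β by v. Then W(β) < W(α) and W(w) < W(u); consequently (β,v) < (α,w) < (α,u) in the lexicographic order on bypasses. -/
attribute [local instance] Classical.propDecidable

namespace Quiv

section Aux

variable {Q : Quiv}

lemma isPath_singleton (a : Q.A) : Q.IsPath [a] :=
  ⟨by simp, List.isChain_singleton a⟩

lemma src_eq_head {p : List Q.A} (h : p ≠ []) : Q.src p = some (Q.s (p.head h)) := by
  unfold Quiv.src; rw [List.head?_eq_head h]; rfl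

lemma tgt_eq_getLast {p : List Q.A} (h : p ≠ []) : Q.tgt p = some (Q.t (p.getLast h)) := by
  unfold Quiv.tgt; rw [List.getLast?_eq_getLast_of_ne_nil h]; rfl

lemma IsPath.infix {p q : List Q.A} (hp : Q.IsPath p) (h : q <:+: p) (hq : q ≠ []) :
    Q.IsPath q := ⟨hq, hp.2.infix h⟩

/-- Under `NoCycle`, a path has no repeated arrows. -/
lemma IsPath.nodup (hnc : Q.NoCycle) {p : List Q.A} (hp : Q.IsPath p) : p.Nodup := by
  have key : ∀ i j, ∀ hi : i < p.length, ∀ hj : j < p.length,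
      i < j → p[i] = p[j] → False := ?_
  · rw [List.nodup_iff_injective_getElem]
    rintro ⟨i, hi⟩ ⟨j, hj⟩ hij
    simp only [Fin.getElem_fin] at hij
    by_contra hne
    have hne' : i ≠ j := fun h => hne (Fin.ext h)
    rcases lt_trichotomy i j with h | h | h
    · exact (key i j hi hj h hij).elim
    · exact hne' h
    · exact (key j i hj hi h hij.symm).elim
  intro i j hi hj hlt hij
  set q : List Q.A := (p.drop i).take (j - i) with hq
  have hqlen : q.length = j - i := by
    simp [hq]; omega
  have hqne : q ≠ [] := by
    intro h; rw [h] at hqlen; simp at hqlen; omega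
  have hqpath : Q.IsPath q :=
    hp.infix (((p.drop i).take_prefix _).isInfix.trans (p.drop_suffix i).isInfix) hqne
  exact hnc q hqpath (by
  rw [src_eq_head hqne, tgt_eq_getLast hqne]
  have h0 : q.head hqne = p[i] := by
    rw [List.head_eq_getElem_zero]
    simp [hq]
  have hlast : q.getLast hqne = p[j-1] := by
    rw [List.getLast_eq_getElem]
    simp only [hq, hqlen]
    rw [List.getElem_take, List.getElem_drop]
    congr 1
    simp only [List.length_take, List.length_drop]
    omega
  have hchain : Q.t p[j-1] = Q.s p[j] := by
    have h := List.isChain_iff_getElem.1 hp.2 (j-1) (by simpa using by omega)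
    convert h using 3
    omega
  rw [h0, hlast, hchain, hij])

lemma finite_bypass [Fintype Q.A] (hnc : Q.NoCycle) (γ : Q.A) :
    Finite {p : List Q.A // Q.IsBypass γ p} := by
  classical
  have : {p : List Q.A | Q.IsBypass γ p}.Finite := by
    refine (List.finite_length_le (α := Q.A) (Fintype.card Q.A)).subset ?_
    intro p hp
    exact (hp.1.nodup hnc).length_le_card
  exact this.to_subtype

/-- A bypass of `γ` never starts with `γ`. -/
lemma bypass_head_ne_s7 (hnc : Q.NoCycle) {γ : Q.A} {rest : List Q.A}
    (hp : Q.IsBypass γ (γ :: rest)) : False := by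
  obtain ⟨⟨-, hch⟩, hsrc, htgt, hne'⟩ := hp
  have hrest : rest ≠ [] := fun h => hne' (by rw [h])
  obtain ⟨r, rs, rfl⟩ := List.exists_cons_of_ne_nil hrest
  unfold List.Chain' at hch
  rw [List.isChain_cons_cons] at hch
  refine hnc (r :: rs) ⟨by simp, hch.2⟩ ?_
  rw [src_eq_head (by simp), tgt_eq_getLast (by simp)]
  rw [tgt_eq_getLast (p := γ :: r :: rs) (by simp)] at htgt
  simp only [List.head_cons]
  rw [← hch.1]
  rw [List.getLast_cons (by simp)] at htgt
  simp only [Option.some.injEq] at htgt ⊢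
  rw [htgt]

lemma src_splice {u₁ p q u₂ : List Q.A} (hp : p ≠ []) (hq : q ≠ [])
    (h : Q.src q = Q.src p) : Q.src (u₁ ++ q ++ u₂) = Q.src (u₁ ++ p ++ u₂) := by
  unfold Quiv.src at *
  cases u₁ with
  | nil => simpa [List.head?_append, List.head?_eq_head hp, List.head?_eq_head hq] using h
  | cons a l => simp [List.head?_append]

lemma tgt_splice {u₁ p q u₂ : List Q.A} (hp : p ≠ []) (hq : q ≠ [])
    (h : Q.tgt q = Q.tgt p) : Q.tgt (u₁ ++ q ++ u₂) = Q.tgt (u₁ ++ p ++ u₂) := by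
  unfold Quiv.tgt at *
  rcases List.eq_nil_or_concat u₂ with rfl | ⟨l, a, rfl⟩
  · simpa [List.getLast?_append, List.getLast?_eq_getLast_of_ne_nil hp,
      List.getLast?_eq_getLast_of_ne_nil hq] using h
  · simp [List.getLast?_append]

lemma isPath_splice {u₁ u₂ p q : List Q.A} (h : Q.IsPath (u₁ ++ p ++ u₂))
    (hq : Q.IsPath q) (hp : p ≠ []) (hs : Q.src q = Q.src p) (ht : Q.tgt q = Q.tgt p) :
    Q.IsPath (u₁ ++ q ++ u₂) := by
  have hqne := hq.1
  constructor
  · simp [hqne]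
  · have hch := h.2
    unfold List.Chain' at hch ⊢
    rw [List.append_assoc, List.isChain_append, List.isChain_append] at hch ⊢
    obtain ⟨h1, ⟨h2, h3, h4⟩, h5⟩ := hch
    refine ⟨h1, ⟨hq.2, h3, ?_⟩, ?_⟩
    · -- junction q → u₂ : uses tgt q = tgt p
      intro x hx y hy
      obtain rfl : q.getLast hqne = x := by
        rw [List.getLast?_eq_getLast_of_ne_nil hqne] at hx; simpa using hx
      rw [tgt_eq_getLast hqne, tgt_eq_getLast hp] at ht
      simp only [Option.some.injEq] at ht
      have := h4 (p.getLast hp) (by rw [List.getLast?_eq_getLast_of_ne_nil hp]; rfl) y hy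
      rw [ht]; exact this
    · -- junction u₁ → q : uses src q = src p
      intro x hx y hy
      obtain rfl : q.head hqne = y := by
        have hh : (q ++ u₂).head? = some (q.head hqne) := by
          rw [List.head?_append, List.head?_eq_head hqne]; rfl
        rw [Option.mem_def, hh, Option.some_inj] at hy
        exact hy
      rw [src_eq_head hqne, src_eq_head hp] at hs
      simp only [Option.some.injEq] at hs
      have := h5 x hx (p.head hp) (by rw [List.head?_append, List.head?_eq_head hp]; rfl)
      rw [hs]; exact this

/-- Splicing a bypass of `γ` into a bypass of `β` through an occurrence of `γ`. -/
lemma IsBypass.splice (hnm : Q.NoMultipleArrows) {β γ : Q.A} {u₁ u₂ q : List Q.A}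
    (hu : Q.IsBypass β (u₁ ++ [γ] ++ u₂)) (hq : Q.IsBypass γ q) :
    Q.IsBypass β (u₁ ++ q ++ u₂) := by
  obtain ⟨hupath, husrc, hutgt, hune⟩ := hu
  obtain ⟨hqpath, hqsrc, hqtgt, hqne⟩ := hq
  have hs : Q.src q = Q.src [γ] := by rw [hqsrc]; rw [src_eq_head (p := [γ]) (by simp)]; rfl
  have ht : Q.tgt q = Q.tgt [γ] := by rw [hqtgt]; rw [tgt_eq_getLast (p := [γ]) (by simp)]; rfl
  refine ⟨isPath_splice hupath hqpath (by simp) hs ht, ?_, ?_, ?_⟩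
  · rw [src_splice (by simp) hqpath.1 hs]; exact husrc
  · rw [tgt_splice (by simp) hqpath.1 ht]; exact hutgt
  · intro habs
    have hlen := congrArg List.length habs
    simp only [List.length_append, List.length_cons, List.length_nil] at hlen
    have h1 : u₁ = [] := by
      have := hqpath.1
      have : 1 ≤ q.length := List.length_pos_iff.2 hqpath.1
      exact List.length_eq_zero_iff.1 (by omega)
    have h2 : u₂ = [] := by
      have : 1 ≤ q.length := List.length_pos_iff.2 hqpath.1
      exact List.length_eq_zero_iff.1 (by omega)
    subst h1; subst h2
    simp only [List.nil_append, List.append_nil] at habs hs ht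
    subst habs
    rw [src_eq_head (p := [β]) (by simp), src_eq_head (p := [γ]) (by simp)] at hs
    rw [tgt_eq_getLast (p := [β]) (by simp), tgt_eq_getLast (p := [γ]) (by simp)] at ht
    simp only [List.head_cons, List.getLast_singleton, Option.some.injEq] at hs ht
    exact hqne (by rw [hnm β γ hs ht])

/-- Key counting lemma: for any bypass `(β, v)`, `W(v) < W(β)`. -/
lemma Wp_lt_Wa [Fintype Q.A] (hnc : Q.NoCycle) (hnm : Q.NoMultipleArrows)
    {β : Q.A} {v : List Q.A} (h : Q.IsBypass β v) : Q.Wp v < Q.Wa β := by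
  classical
  haveI hfin : ∀ γ : Q.A, Finite {p : List Q.A // Q.IsBypass γ p} := finite_bypass hnc
  have hdecomp : ∀ i : Fin v.length, v = v.take i.1 ++ [v[i.1]] ++ v.drop (i.1 + 1) := by
    intro i
    conv_lhs => rw [← List.take_append_drop i.1 v]
    rw [List.drop_eq_getElem_cons i.2]
    simp
  have hsplice : ∀ (i : Fin v.length) (p : List Q.A), Q.IsBypass v[i.1] p →
      Q.IsBypass β (v.take i.1 ++ p ++ v.drop (i.1 + 1)) := by
    intro i p hp
    have hv := h
    rw [hdecomp i] at hv
    exact IsBypass.splice hnm hv hp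
  -- key: a spliced list remembers `v[i]` at position `i`
  have L1 : ∀ (i : Fin v.length) (p : List Q.A), Q.IsBypass v[i.1] p →
      v.take i.1 ++ p ++ v.drop (i.1 + 1) = v → False := by
    intro i p hp heq
    conv_rhs at heq => rw [hdecomp i]
    rw [List.append_assoc, List.append_assoc] at heq
    have heq' := List.append_cancel_left heq
    obtain ⟨hd, tl, rfl⟩ := List.exists_cons_of_ne_nil hp.1.1
    simp only [List.cons_append, List.singleton_append, List.cons.injEq] at heq'
    obtain ⟨rfl, -⟩ := heq'
    exact bypass_head_ne_s7 hnc hp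
  have L2 : ∀ (i j : Fin v.length), i.1 < j.1 → ∀ (p : List Q.A), Q.IsBypass v[i.1] p →
      ∀ (q : List Q.A), Q.IsBypass v[j.1] q →
      v.take i.1 ++ p ++ v.drop (i.1 + 1) = v.take j.1 ++ q ++ v.drop (j.1 + 1) → False := by
    intro i j hij p hp q hq heq
    obtain ⟨k, hk⟩ : ∃ k, j.1 - i.1 = k + 1 := ⟨j.1 - i.1 - 1, by omega⟩
    have htj : v.take j.1 = v.take i.1 ++ (v[i.1] :: (v.drop (i.1 + 1)).take k) := by
      have : j.1 = i.1 + (k + 1) := by omega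
      rw [this, List.take_add, List.drop_eq_getElem_cons i.2, List.take_succ_cons]
    rw [htj, List.append_assoc, List.append_assoc, List.append_assoc] at heq
    have heq' := List.append_cancel_left heq
    obtain ⟨hd, tl, rfl⟩ := List.exists_cons_of_ne_nil hp.1.1
    simp only [List.cons_append, List.cons.injEq] at heq'
    obtain ⟨rfl, -⟩ := heq'
    exact bypass_head_ne_s7 hnc hp
  let T := (i : Fin v.length) × {p : List Q.A // Q.IsBypass v[i.1] p}
  let F : Option T → {w : List Q.A // Q.IsBypass β w} := fun a =>
    match a with
    | none => ⟨v, h⟩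
    | some ⟨i, p, hp⟩ => ⟨v.take i.1 ++ p ++ v.drop (i.1 + 1), hsplice i p hp⟩
  have hFinj : Function.Injective F := by
    rintro (_ | ⟨i, p, hp⟩) (_ | ⟨j, q, hq⟩) hab
    · rfl
    · exact ((L1 j q hq (congrArg Subtype.val hab).symm)).elim
    · exact ((L1 i p hp (congrArg Subtype.val hab))).elim
    · have hval : v.take i.1 ++ p ++ v.drop (i.1 + 1) = v.take j.1 ++ q ++ v.drop (j.1 + 1) :=
        congrArg Subtype.val hab
      rcases lt_trichotomy i.1 j.1 with hlt | hle | hlt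
      · exact (L2 i j hlt p hp q hq hval).elim
      · obtain rfl : i = j := Fin.ext hle
        obtain rfl : p = q := by
          rw [List.append_assoc, List.append_assoc] at hval
          exact List.append_cancel_right (List.append_cancel_left hval)
        rfl
      · exact (L2 j i hlt q hq p hp hval.symm).elim
  have hcard := Nat.card_le_card_of_injective F hFinj
  rw [Finite.card_option] at hcard
  have hT : Nat.card T = Q.Wp v := by
    haveI : ∀ i : Fin v.length, Fintype {p : List Q.A // Q.IsBypass v[i.1] p} :=
      fun i => @Fintype.ofFinite _ (hfin _)
    rw [Nat.card_eq_fintype_card, Fintype.card_sigma]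
    have : Q.Wp v = ∑ i : Fin v.length, Q.Wa v[i.1] := (Fin.sum_univ_fun_getElem v Q.Wa).symm
    rw [this]
    refine Finset.sum_congr rfl fun i _ => ?_
    rw [Quiv.Wa, Nat.card_eq_fintype_card]
  rw [hT] at hcard
  show Q.Wp v < Nat.card {u : List Q.A // Q.IsBypass β u}
  omega

end Aux


/-- Let `(α,u,β,v)` be a double bypass, write `u = u₂ β u₁` and let
`w := u₂ v u₁` be the path obtained from `u` after replacing `β` by `v`.  Then
`W(β) < W(α)` and `W(w) < W(u)`; consequently `(β,v) < (α,w) < (α,u)` in the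
lexicographic order on bypasses.  (Lists of arrows are written in traversal order, so
`u = u₂ β u₁` reads `u = u₁ ++ β :: u₂` and `w = u₁ ++ v ++ u₂`.) -/
theorem stmt_7 (Q : Quiv) [Fintype Q.V] [Fintype Q.A]
    (hnc : Q.NoCycle) (hnm : Q.NoMultipleArrows) (o : Q.PathOrder)
    (α β : Q.A) (u v u₁ u₂ : List Q.A)
    (hαu : Q.IsBypass α u) (hβv : Q.IsBypass β v)
    (hdec : u = u₁ ++ β :: u₂) :
    Q.Wa β < Q.Wa α ∧ Q.Wp (u₁ ++ v ++ u₂) < Q.Wp u ∧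
    o.bplt (β, v) (α, u₁ ++ v ++ u₂) ∧ o.bplt (α, u₁ ++ v ++ u₂) (α, u) := by
  have hWβv : Q.Wp v < Q.Wa β := Wp_lt_Wa hnc hnm hβv
  have hWuα : Q.Wp u < Q.Wa α := Wp_lt_Wa hnc hnm hαu
  have hβmem : Q.Wa β ∈ u.map Q.Wa := by
    rw [hdec]
    exact List.mem_map_of_mem (f := Q.Wa) (by simp)
  have hWβu : Q.Wa β ≤ Q.Wp u := List.le_sum_of_mem hβmem
  have h1 : Q.Wa β < Q.Wa α := lt_of_le_of_lt hWβu hWuα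
  have hWw : Q.Wp (u₁ ++ v ++ u₂) < Q.Wp u := by
    have hv := hWβv
    rw [hdec]
    unfold Quiv.Wp at hv ⊢
    simp only [List.map_append, List.sum_append, List.map_cons, List.sum_cons]
    omega
  have hw : Q.IsBypass α (u₁ ++ v ++ u₂) := by
    have hu' : Q.IsBypass α (u₁ ++ [β] ++ u₂) := by
      rw [hdec] at hαu; simpa using hαu
    exact IsBypass.splice hnm hu' hβv
  refine ⟨h1, hWw, Or.inl ?_, Or.inr ⟨rfl, ?_⟩⟩
  · refine o.wlt [β] [α] (isPath_singleton β) (isPath_singleton α) ?_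
    simpa [Quiv.Wp] using h1
  · exact o.wlt _ _ hw.1 hαu.1 hWw

end Quiv
end
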